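/- arXiv:2002.10845 — 5 statements merged into one kernel-verified Lean document; each statement's English description precedes it below -/
import Mathlib

section
/- Let G, H, K be finite groups and R ≤ G × H, T ≤ H × K subgroups. For a relation S define the operator Π(S) on functions by (Π(S)f)(g) = Σ_{h : (g,h) ∈ S} f(h). Then Π(R) ∘ Π(T) = |ker T ∩ indef R| · Π(TR), where ker T = {h : (h,1) ∈ T}, indef R = {h : (1,h) ∈ R}, and TR is the relational composition. -/
open scoped Classical

open Finset

/-!
After exchanging the two sums, the coefficient of `f k` is the number of `h` with `(g, h) ∈ R`
and `(h, k) ∈ T`. This set is empty unless `(g, k) ∈ TR`, and otherwise, for any witness `h₀`,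
it is the left coset `h₀ (ker T ∩ indef R)`, since `R` and `T` are subgroups.
-/

section

variable {G H K : Type*}

theorem sum_relation_comp_eq_sum_card_mul [Fintype H] [Fintype K] (R : Set (G × H))
    (T : Set (H × K)) (f : K → ℂ) (g : G) :
    (∑ h : H, if (g, h) ∈ R then (∑ k : K, if (h, k) ∈ T then f k else 0) else 0) =
      ∑ k : K, (Nat.card {h : H // (g, h) ∈ R ∧ (h, k) ∈ T} : ℂ) * f k := by
  calc (∑ h : H, if (g, h) ∈ R then (∑ k : K, if (h, k) ∈ T then f k else 0) else 0)
      = ∑ h : H, ∑ k : K, if (g, h) ∈ R ∧ (h, k) ∈ T then f k else 0 := by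
        simp only [ite_and, ite_sum_zero]
    _ = ∑ k : K, ∑ h : H, if (g, h) ∈ R ∧ (h, k) ∈ T then f k else 0 := sum_comm
    _ = _ := by
        simp only [sum_ite, sum_const_zero, add_zero, sum_const,
          nsmul_eq_mul, Nat.card_eq_fintype_card, Fintype.card_subtype]

variable [Group G] [Group H] [Group K]

theorem card_comp_fiber_eq_of_mem (R : Subgroup (G × H)) (T : Subgroup (H × K)) {g : G} {k : K}
    {h₀ : H} (hR : (g, h₀) ∈ R) (hT : (h₀, k) ∈ T) :
    Nat.card {h : H // (g, h) ∈ R ∧ (h, k) ∈ T} =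
      Nat.card {h : H // (h, (1 : K)) ∈ T ∧ ((1 : G), h) ∈ R} := by
  refine Nat.card_congr (Equiv.subtypeEquiv (Equiv.mulLeft h₀⁻¹) fun h => ?_)
  have hR' : ((1 : G), h₀⁻¹ * h) ∈ R ↔ (g, h) ∈ R := by
    simpa using R.mul_mem_cancel_left (x := (g, h₀)⁻¹) (y := (g, h)) (R.inv_mem hR)
  have hT' : (h₀⁻¹ * h, (1 : K)) ∈ T ↔ (h, k) ∈ T := by
    simpa using T.mul_mem_cancel_left (x := (h₀, k)⁻¹) (y := (h, k)) (T.inv_mem hT)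
  simp only [Equiv.coe_mulLeft, hR', hT', and_comm]

end

theorem stmt7_general {G H K : Type*} [Group G] [Group H] [Group K]
    [Fintype H] [Fintype K]
    (R : Subgroup (G × H)) (T : Subgroup (H × K)) (f : K → ℂ) (g : G) :
    (∑ h : H, if (g, h) ∈ R then (∑ k : K, if (h, k) ∈ T then f k else 0) else 0) =
      (Nat.card {h : H // (h, (1 : K)) ∈ T ∧ ((1 : G), h) ∈ R} : ℂ) *
        ∑ k : K, if (∃ h : H, (g, h) ∈ R ∧ (h, k) ∈ T) then f k else 0 := by
  refine (sum_relation_comp_eq_sum_card_mul (R : Set (G × H)) (T : Set (H × K)) f g).trans ?_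
  simp only [SetLike.mem_coe, mul_sum]
  refine sum_congr rfl fun k _ => ?_
  split_ifs with hex
  · obtain ⟨h₀, hR, hT⟩ := hex
    rw [card_comp_fiber_eq_of_mem R T hR hT]
  · have : IsEmpty {h : H // (g, h) ∈ R ∧ (h, k) ∈ T} := ⟨fun h => hex ⟨h.1, h.2⟩⟩
    simp

/-- For finite groups and multiplicative relations `R ≤ G × H`, `T ≤ H × K`, the summation
operators satisfy `Π(R) ∘ Π(T) = |ker T ∩ indef R| · Π(TR)`. -/
theorem stmt7 {G H K : Type*} [Group G] [Group H] [Group K]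
    [Fintype G] [Fintype H] [Fintype K]
    (R : Subgroup (G × H)) (T : Subgroup (H × K)) (f : K → ℂ) (g : G) :
    (∑ h : H, if (g, h) ∈ R then (∑ k : K, if (h, k) ∈ T then f k else 0) else 0) =
      (Nat.card {h : H // (h, (1 : K)) ∈ T ∧ ((1 : G), h) ∈ R} : ℂ) *
        ∑ k : K, if (∃ h : H, (g, h) ∈ R ∧ (h, k) ∈ T) then f k else 0 :=
  stmt7_general R T f g
end

section
/- Let G, H, K be finite groups and R ≤ G × H, T ≤ H × K subgroups. Then |ker T ∩ indef R| · |indef TR| = |indef T| · |indef R ∩ dom T|, where for a relation S, ker S, indef S, dom S, im S are as usual and TR is the relational composition. -/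
/-!
Let `U = T ∩ (indef R × K)`, the part of `T` whose `H`-coordinate lies in `indef R`. Then
`ker U = ker T ∩ indef R`, `im U = indef TR`, `indef U = indef T` and `dom U = indef R ∩ dom T`,
and for any subgroup `U` of a product the first isomorphism theorem, applied to the two
projections, gives `|ker U| · |im U| = |U| = |indef U| · |dom U|`.
-/

namespace Subgroup

variable {A G B : Type*} [Group A] [Group G] [Group B]

theorem card_comap_mul_card_map_of_exact {f : A →* G} {g : G →* B}
    (hf : Function.Injective f) (hfg : f.range = g.ker) (I : Subgroup G) :
    Nat.card (I.comap f) * Nat.card (I.map g) = Nat.card I := by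
  have hker : Nat.card (I.comap f) = Nat.card (g.ker.subgroupOf I) := calc
    Nat.card (I.comap f) = Nat.card ((I.comap f).map f) := (card_map_of_injective hf).symm
    _ = Nat.card ↥(I ⊓ g.ker) := by rw [map_comap_eq, hfg, inf_comm]
    _ = Nat.card ((I ⊓ g.ker).subgroupOf I) :=
      Nat.card_congr (subgroupOfEquivOfLe inf_le_left).toEquiv.symm
    _ = Nat.card (g.ker.subgroupOf I) := by rw [inf_subgroupOf_left]
  rw [hker, ← relIndex_ker]
  exact card_mul_index _

end Subgroup

namespace MonoidHom

variable {H K : Type*} [Group H] [Group K]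

theorem range_inl_eq_ker_snd : (inl H K).range = (snd H K).ker := by
  ext ⟨h, k⟩
  simp [Subgroup.mem_prod, eq_comm]

theorem range_inr_eq_ker_fst : (inr H K).range = (fst H K).ker := by
  ext ⟨h, k⟩
  simp [Subgroup.mem_prod, eq_comm]

end MonoidHom

theorem stmt8_general {G H K : Type*} [Group G] [Group H] [Group K]
    (R : Subgroup (G × H)) (T : Subgroup (H × K)) :
    Nat.card {h : H // (h, (1 : K)) ∈ T ∧ ((1 : G), h) ∈ R} *
      Nat.card {k : K // ∃ h : H, ((1 : G), h) ∈ R ∧ (h, k) ∈ T} =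
    Nat.card {k : K // ((1 : H), k) ∈ T} *
      Nat.card {h : H // ((1 : G), h) ∈ R ∧ ∃ k : K, (h, k) ∈ T} := by
  let U : Subgroup (H × K) := T ⊓ (R.comap (MonoidHom.inr G H)).comap (MonoidHom.fst H K)
  have hker : Nat.card {h : H // (h, (1 : K)) ∈ T ∧ ((1 : G), h) ∈ R} =
      Nat.card (U.comap (MonoidHom.inl H K)) :=
    Nat.card_congr (Equiv.subtypeEquivRight fun h => by simp [U])
  have him : Nat.card {k : K // ∃ h : H, ((1 : G), h) ∈ R ∧ (h, k) ∈ T} =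
      Nat.card (U.map (MonoidHom.snd H K)) :=
    Nat.card_congr (Equiv.subtypeEquivRight fun k => by simp [U, and_comm])
  have hindef : Nat.card {k : K // ((1 : H), k) ∈ T} =
      Nat.card (U.comap (MonoidHom.inr H K)) :=
    Nat.card_congr (Equiv.subtypeEquivRight fun k => by simp [U])
  have hdom : Nat.card {h : H // ((1 : G), h) ∈ R ∧ ∃ k : K, (h, k) ∈ T} =
      Nat.card (U.map (MonoidHom.fst H K)) :=
    Nat.card_congr (Equiv.subtypeEquivRight fun h => by simp [U, and_comm])
  rw [hker, him, hindef, hdom,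
    Subgroup.card_comap_mul_card_map_of_exact (fun _ _ h => congrArg Prod.fst h)
      MonoidHom.range_inl_eq_ker_snd,
    Subgroup.card_comap_mul_card_map_of_exact (fun _ _ h => congrArg Prod.snd h)
      MonoidHom.range_inr_eq_ker_fst]

/-- For finite groups and multiplicative relations `R ≤ G × H`, `T ≤ H × K`:
`|ker T ∩ indef R| · |indef TR| = |indef T| · |indef R ∩ dom T|`. -/
theorem stmt8 {G H K : Type*} [Group G] [Group H] [Group K]
    [Fintype G] [Fintype H] [Fintype K]
    (R : Subgroup (G × H)) (T : Subgroup (H × K)) :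
    Nat.card {h : H // (h, (1 : K)) ∈ T ∧ ((1 : G), h) ∈ R} *
      Nat.card {k : K // ∃ h : H, ((1 : G), h) ∈ R ∧ (h, k) ∈ T} =
    Nat.card {k : K // ((1 : H), k) ∈ T} *
      Nat.card {h : H // ((1 : G), h) ∈ R ∧ ∃ k : K, (h, k) ∈ T} :=
  stmt8_general R T
end

section
/- Let X, Y, Z be locally compact Hausdorff spaces and R ⊆ X × Y, S ⊆ Y × Z closed subsets such that both coordinate projections of R and of S are proper maps. Then the composed relation SR = {(x,z) : ∃ y, (x,y) ∈ R ∧ (y,z) ∈ S} is a closed subset of X × Z with both projections proper. -/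
/-!
Compose through the closed "fibred product" `{(r, z) ∈ R × Z | (r.2, z) ∈ S}`: its image under
the proper map `fst × id : R × Z → X × Z` is `R ○ S`, which is therefore closed. Over a compact
`K ⊆ X` the relation `R ○ S` lies in the compact set `K × S(R(K))`, so its first projection is
proper; the second projection is the first projection of `(R ○ S)⁻¹ = S⁻¹ ○ R⁻¹`.
-/

namespace SetRel

variable {X Y Z : Type*} [TopologicalSpace X] [TopologicalSpace Y] [TopologicalSpace Z]

structure IsBiProper (R : SetRel X Y) : Prop where
  isClosed : IsClosed R
  isProperMap_fst : IsProperMap (fun p : R => (p : X × Y).1)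
  isProperMap_snd : IsProperMap (fun p : R => (p : X × Y).2)

variable {R : SetRel X Y} {S : SetRel Y Z}

theorem isProperMap_fst_inv :
    IsProperMap (fun p : R.inv => (p : Y × X).1) ↔ IsProperMap (fun p : R => (p : X × Y).2) := by
  let e : R.inv ≃ₜ R := (Homeomorph.prodComm Y X).subtype fun _ ↦ Iff.rfl
  exact ⟨fun h ↦ h.comp e.symm.isProperMap, fun h ↦ h.comp e.isProperMap⟩

theorem IsBiProper.inv (h : R.IsBiProper) : R.inv.IsBiProper where
  isClosed := h.isClosed.preimage continuous_swap
  isProperMap_fst := isProperMap_fst_inv.2 h.isProperMap_snd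
  isProperMap_snd := isProperMap_fst_inv.1 h.isProperMap_fst

theorem isCompact_image (hR : IsProperMap (fun p : R => (p : X × Y).1)) {K : Set X}
    (hK : IsCompact K) : IsCompact (R.image K) := by
  have : R.image K = (fun p : R => (p : X × Y).2) '' ((fun p : R => (p : X × Y).1) ⁻¹' K) := by
    ext y
    constructor
    · rintro ⟨x, hx, hxy⟩
      exact ⟨⟨(x, y), hxy⟩, hx, rfl⟩
    · rintro ⟨⟨⟨x, y⟩, hxy⟩, hx, rfl⟩
      exact ⟨x, hx, hxy⟩
  rw [this]
  exact (hR.isCompact_preimage hK).image (by fun_prop)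

theorem isClosed_comp (hR : IsProperMap (fun p : R => (p : X × Y).1)) (hS : IsClosed S) :
    IsClosed (R ○ S) := by
  have hC : IsClosed {q : R × Z | ((q.1 : X × Y).2, q.2) ∈ S} := hS.preimage (by fun_prop)
  convert (hR.prodMap isProperMap_id).isClosedMap _ hC
  ext ⟨x, z⟩
  constructor
  · rintro ⟨y, hxy, hyz⟩
    exact ⟨(⟨(x, y), hxy⟩, z), hyz, rfl⟩
  · rintro ⟨⟨⟨⟨x', y⟩, hxy⟩, z'⟩, hyz, h⟩
    cases h
    exact ⟨y, hxy, hyz⟩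

theorem isProperMap_fst_comp [T2Space X] [CompactlyCoherentSpace X]
    (hR : IsProperMap (fun p : R => (p : X × Y).1)) (hS : IsClosed S)
    (hS₁ : IsProperMap (fun p : S => (p : Y × Z).1)) :
    IsProperMap (fun p : R ○ S => (p : X × Z).1) := by
  refine isProperMap_iff_isCompact_preimage.2 ⟨by fun_prop, fun K hK ↦ ?_⟩
  have hL : IsCompact (S.image (R.image K)) := isCompact_image hS₁ (isCompact_image hR hK)
  refine ((isClosed_comp hR hS).isClosedEmbedding_subtypeVal.isCompact_preimage
    (hK.prod hL)).of_isClosed_subset (hK.isClosed.preimage (by fun_prop)) ?_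
  rintro ⟨⟨x, z⟩, y, hxy, hyz⟩ hx
  exact ⟨hx, y, ⟨x, hx, hxy⟩, hyz⟩

theorem IsBiProper.comp [T2Space X] [CompactlyCoherentSpace X] [T2Space Z]
    [CompactlyCoherentSpace Z] (hR : R.IsBiProper) (hS : S.IsBiProper) : (R ○ S).IsBiProper where
  isClosed := isClosed_comp hR.isProperMap_fst hS.isClosed
  isProperMap_fst := isProperMap_fst_comp hR.isProperMap_fst hS.isClosed hS.isProperMap_fst
  isProperMap_snd := by
    rw [← isProperMap_fst_inv, inv_comp]
    exact isProperMap_fst_comp hS.inv.isProperMap_fst hR.inv.isClosed hR.inv.isProperMap_fst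

end SetRel

theorem stmt12_general {X Y Z : Type*} [TopologicalSpace X] [TopologicalSpace Y] [TopologicalSpace Z]
    [LocallyCompactSpace X] [LocallyCompactSpace Z]
    [T2Space X] [T2Space Z]
    (R : Set (X × Y)) (S : Set (Y × Z)) (hR : IsClosed R) (hS : IsClosed S)
    (hR1 : IsProperMap (fun p : R => (p : X × Y).1))
    (hR2 : IsProperMap (fun p : R => (p : X × Y).2))
    (hS1 : IsProperMap (fun p : S => (p : Y × Z).1))
    (hS2 : IsProperMap (fun p : S => (p : Y × Z).2)) :
    IsClosed {q : X × Z | ∃ y : Y, (q.1, y) ∈ R ∧ (y, q.2) ∈ S} ∧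
    IsProperMap (fun p : {q : X × Z | ∃ y : Y, (q.1, y) ∈ R ∧ (y, q.2) ∈ S} =>
      (p : X × Z).1) ∧
    IsProperMap (fun p : {q : X × Z | ∃ y : Y, (q.1, y) ∈ R ∧ (y, q.2) ∈ S} =>
      (p : X × Z).2) :=
  have h := SetRel.IsBiProper.comp ⟨hR, hR1, hR2⟩ ⟨hS, hS1, hS2⟩
  ⟨h.isClosed, h.isProperMap_fst, h.isProperMap_snd⟩

/-- The composition of two bi-proper relations is bi-proper. -/
theorem stmt12 {X Y Z : Type*} [TopologicalSpace X] [TopologicalSpace Y] [TopologicalSpace Z]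
    [LocallyCompactSpace X] [LocallyCompactSpace Y] [LocallyCompactSpace Z]
    [T2Space X] [T2Space Y] [T2Space Z]
    (R : Set (X × Y)) (S : Set (Y × Z)) (hR : IsClosed R) (hS : IsClosed S)
    (hR1 : IsProperMap (fun p : R => (p : X × Y).1))
    (hR2 : IsProperMap (fun p : R => (p : X × Y).2))
    (hS1 : IsProperMap (fun p : S => (p : Y × Z).1))
    (hS2 : IsProperMap (fun p : S => (p : Y × Z).2)) :
    IsClosed {q : X × Z | ∃ y : Y, (q.1, y) ∈ R ∧ (y, q.2) ∈ S} ∧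
    IsProperMap (fun p : {q : X × Z | ∃ y : Y, (q.1, y) ∈ R ∧ (y, q.2) ∈ S} =>
      (p : X × Z).1) ∧
    IsProperMap (fun p : {q : X × Z | ∃ y : Y, (q.1, y) ∈ R ∧ (y, q.2) ∈ S} =>
      (p : X × Z).2) :=
  stmt12_general R S hR hS hR1 hR2 hS1 hS2
end

section
/- Let V be a locally compact Hausdorff second-countable topological abelian group in which every element v satisfies p·v = 0 for a prime p (i.e., V is a topological vector space over 𝔽_p). If V is discrete and infinite, then V is isomorphic as a topological group to the direct sum ⊕_{n ∈ ℕ} 𝔽_p with the discrete topology. -/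
/-- An infinite discrete (second-countable, locally compact) vector space over `𝔽_p`
is isomorphic to the direct sum `⊕_{n ∈ ℕ} 𝔽_p` (with the discrete topology). -/
theorem stmt13 {V : Type*} [AddCommGroup V] [TopologicalSpace V] [IsTopologicalAddGroup V]
    [T2Space V] [LocallyCompactSpace V] [SecondCountableTopology V] [DiscreteTopology V]
    [Infinite V] (p : ℕ) (hp : p.Prime) (h : ∀ v : V, p • v = 0) :
    Nonempty (V ≃+ (ℕ →₀ ZMod p)) := by
  haveI : Fact p.Prime := ⟨hp⟩
  haveI : Module (ZMod p) V := AddCommGroup.zmodModule h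
  -- V is countable since it is second countable and discrete
  haveI : Countable V := by
    obtain ⟨s, hs, hd⟩ := TopologicalSpace.exists_countable_dense V
    have hsu : s = Set.univ := by
      have := hd.closure_eq
      rwa [(isClosed_discrete s).closure_eq] at this
    rw [hsu] at hs
    exact Set.countable_univ_iff.mp hs
  -- take a basis
  let b := Module.Basis.ofVectorSpace (ZMod p) V
  set ι := Module.Basis.ofVectorSpaceIndex (ZMod p) V
  haveI : Countable ι := Subtype.coe_injective.countable
  haveI : Infinite ι := by
    by_contra hfin
    rw [not_infinite_iff_finite] at hfin
    haveI : Finite ι := hfin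
    haveI : Module.Finite (ZMod p) V := Module.Finite.of_basis b
    haveI : Finite V := Module.finite_of_finite (ZMod p)
    exact not_finite V
  obtain ⟨e⟩ : Nonempty (ι ≃ ℕ) := nonempty_equiv_of_countable
  exact ⟨b.repr.toAddEquiv.trans (Finsupp.domCongr (M := ZMod p) e)⟩
end

section
/- Let G be a locally compact group with left Haar measure γ and let R ≤ G × H be a closed subgroup (H locally compact) with Haar measure ρ whose pushforward under the projection π : R → G is dominated by γ. If the kernel ker R = {h ∈ H : (1,h) ∈ R} (the 'indefinity') is non-compact, then for every compact set U ⊆ dom R with nonempty interior, the pushforward measure π_*ρ assigns U infinite measure; hence the indefinity of any polyhomomorphism must be compact. -/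
open MeasureTheory Set Pointwise

/-- If the indefinity `{h : (1,h) ∈ R}` of a closed relation-subgroup `R ≤ G × H` with
Haar measure `ρ` whose projection to `G` is dominated by the Haar measure `γ` is
non-compact, then every compact subset of `dom R` with nonempty interior gets infinite
mass from the pushforward `π_*ρ`. -/
theorem stmt17 {G H : Type*}
    [Group G] [TopologicalSpace G] [IsTopologicalGroup G] [LocallyCompactSpace G]
    [MeasurableSpace G] [BorelSpace G]
    [Group H] [TopologicalSpace H] [IsTopologicalGroup H] [LocallyCompactSpace H]
    [MeasurableSpace H] [BorelSpace H]
    (γ : Measure G) [γ.IsHaarMeasure]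
    (R : Subgroup (G × H)) (hR : IsClosed (R : Set (G × H)))
    (ρ : Measure R) [ρ.IsHaarMeasure]
    (hdom : ∀ A : Set G, MeasurableSet A →
      Measure.map (fun r : R => ((r : G × H).1)) ρ A ≤ γ A)
    (hnc : ¬ IsCompact {h : H | ((1 : G), h) ∈ R}) :
    ∀ U : Set G, IsCompact U → U ⊆ {g : G | ∃ h : H, (g, h) ∈ R} →
      (interior U).Nonempty →
      Measure.map (fun r : R => ((r : G × H).1)) ρ U = ⊤ := by
  intro U hUcpt hUdom hUint
  obtain ⟨g₀, hg₀⟩ := hUint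
  obtain ⟨h₀, hr₀⟩ := hUdom (interior_subset hg₀)
  set K : Set H := {h : H | ((1 : G), h) ∈ R} with hKdef
  have hKclosed : IsClosed K := hR.preimage (continuous_const.prodMk continuous_id)
  obtain ⟨Bc, hBc, hBcmem⟩ := exists_compact_mem_nhds h₀
  set B : Set H := interior Bc with hBdef
  have hBopen : IsOpen B := isOpen_interior
  have hh₀B : h₀ ∈ B := mem_interior_iff_mem_nhds.2 hBcmem
  set D : Set H := Bc * Bc⁻¹ with hDdef
  have hDcpt : IsCompact D := hBc.mul hBc.inv
  -- choose a sequence in K with pairwise separated translates of D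
  obtain ⟨f, hfK, hfD⟩ : ∃ f : ℕ → H, (∀ n, f n ∈ K) ∧ ∀ m n, m < n → f n ∉ f m • D := by
    apply exists_seq_of_forall_finset_exists (fun h => h ∈ K) (fun x y => y ∉ x • D)
    intro s _
    have hT : IsCompact (⋃ x ∈ s, x • D) :=
      s.finite_toSet.isCompact_biUnion (fun x _ => hDcpt.smul x)
    by_contra hcon
    push_neg at hcon
    exact hnc (hT.of_isClosed_subset hKclosed (by
      intro y hy
      obtain ⟨x, hx, hxy⟩ := hcon y hy
      exact mem_biUnion hx hxy))
  set π : R → G := fun r => ((r : G × H).1) with hπdef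
  have hπ : Measurable π := measurable_fst.comp measurable_subtype_coe
  set k : ℕ → R := fun n => ⟨((1 : G), f n), hfK n⟩ with hkdef
  set S₀ : Set R := (Subtype.val) ⁻¹' ((interior U) ×ˢ B) with hS₀def
  have hS₀open : IsOpen S₀ := (isOpen_interior.prod hBopen).preimage continuous_subtype_val
  have hS₀ne : S₀.Nonempty := ⟨⟨(g₀, h₀), hr₀⟩, hg₀, hh₀B⟩
  have hS₀meas : MeasurableSet S₀ :=
    measurable_subtype_coe (isOpen_interior.measurableSet.prod hBopen.measurableSet)
  have hS₀pos : 0 < ρ S₀ := hS₀open.measure_pos ρ hS₀ne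
  have hmulmeas : ∀ c : R, Measurable fun r : R => c * r := by
    intro c
    apply Measurable.subtype_mk
    exact (((measurable_const_mul _).comp (measurable_fst.comp measurable_subtype_coe)).prod
      ((measurable_const_mul _).comp (measurable_snd.comp measurable_subtype_coe)))
  set S : ℕ → Set R := fun n => (fun r : R => (k n)⁻¹ * r) ⁻¹' S₀ with hSdef
  have hSmeas : ∀ n, MeasurableSet (S n) := fun n => (hmulmeas _) hS₀meas
  have hSval : ∀ n, ρ (S n) = ρ S₀ := by
    intro n
    have h1 : Measure.map (fun r : R => (k n)⁻¹ * r) ρ = ρ :=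
      MeasureTheory.map_mul_left_eq_self ρ _
    calc ρ (S n) = Measure.map (fun r : R => (k n)⁻¹ * r) ρ S₀ :=
          (Measure.map_apply (hmulmeas _) hS₀meas).symm
      _ = ρ S₀ := by rw [h1]
  have hcoord : ∀ n (r : R), r ∈ S n →
      (r : G × H).1 ∈ interior U ∧ (f n)⁻¹ * (r : G × H).2 ∈ B := by
    intro n r hr
    have h1 : (((k n)⁻¹ * r : R) : G × H) ∈ (interior U) ×ˢ B := hr
    have h2 : (((k n)⁻¹ * r : R) : G × H) = ((1 : G)⁻¹ * (r : G × H).1,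
        (f n)⁻¹ * (r : G × H).2) := by
      simp [hkdef, Prod.ext_iff]
    rw [h2] at h1
    exact ⟨by simpa using h1.1, h1.2⟩
  have hdisj' : ∀ m n, m < n → Disjoint (S m) (S n) := by
    intro m n hmn
    rw [Set.disjoint_left]
    intro r hrm hrn
    have hb := (hcoord m r hrm).2
    have hc := (hcoord n r hrn).2
    apply hfD m n hmn
    rw [Set.mem_smul_set]
    refine ⟨((f m)⁻¹ * (r : G × H).2) * ((f n)⁻¹ * (r : G × H).2)⁻¹,
      Set.mul_mem_mul (interior_subset hb) (Set.inv_mem_inv.2 (interior_subset hc)), ?_⟩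
    simp only [smul_eq_mul]
    group
  have hdisj : Pairwise (Function.onFun Disjoint S) := by
    intro m n hmn
    rcases hmn.lt_or_gt with h | h
    · exact hdisj' m n h
    · exact (hdisj' n m h).symm
  have hsub : (⋃ n, S n) ⊆ π ⁻¹' U := by
    intro r hr
    obtain ⟨n, hn⟩ := mem_iUnion.1 hr
    rw [Set.mem_preimage]
    exact interior_subset (hcoord n r hn).1
  have htop : ρ (⋃ n, S n) = ⊤ := by
    rw [measure_iUnion hdisj hSmeas]
    rw [tsum_congr hSval]
    exact ENNReal.tsum_const_eq_top_of_ne_zero hS₀pos.ne'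
  have h1 : (⊤ : ENNReal) ≤ ρ (π ⁻¹' U) := htop ▸ measure_mono hsub
  have h2 : ρ (π ⁻¹' U) ≤ Measure.map π ρ U := Measure.le_map_apply hπ.aemeasurable U
  exact top_le_iff.1 (h1.trans h2)
end
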